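/- arXiv:0803.4355 — 2 statements merged into one kernel-verified Lean document; each statement's English description precedes it below -/
import Mathlib

section
/- Let n ≥ 1 and let P be an n×n real row-stochastic matrix that is irreducible, with stationary probability vector π (πᵀ P = πᵀ). Let S be a nonempty subset of the index set {1,…,n} and let k ≥ 1. Assume that for every i ∈ S and every m with 1 ≤ m < k one has Σ_{j∈S} (P^m)_{i,j} = 0, and that Σ_{j∈S} (P^k)_{i,j} = 1 for every i ∈ S (i.e., a walker started in S is outside S at all intermediate times 1,…,k−1 and returns to S at time k with probability 1: all paths between consecutive visits to S have the same length k). Define the matrix Q indexed by S × S by Q_{i,j} = (P^k)_{i,j}. Then Q is row-stochastic, and the normalized vector π′ with entries π′_i = π_i / (Σ_{j∈S} π_j) for i ∈ S satisfies π′ᵀ Q = π′ᵀ; that is, π′ is a stationary probability distribution (primary eigenvector) of the induced chain on S. -/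
/-!
Since `π` is stationary for `P ^ k` and every row of `P ^ k` indexed by `S` puts all its mass
on `S`, comparing the `π`-mass of `S` before and after `k` steps shows that no mass enters `S`
from outside: `π i * (P ^ k) i j = 0` for `i ∉ S`, `j ∈ S`. Hence the restriction of `π` to `S`
is already invariant under `Q`, and so is every rescaling of it.
-/

open Finset

namespace Matrix

variable {ι R : Type*} [Fintype ι] [DecidableEq ι]

theorem vecMul_pow_eq_self [Semiring R] {M : Matrix ι ι R} {v : ι → R}
    (hv : v ᵥ* M = v) (m : ℕ) : v ᵥ* M ^ m = v := by
  induction m with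
  | zero => simp
  | succ m ih => rw [pow_succ, ← vecMul_vecMul, ih, hv]

variable [Ring R] [PartialOrder R] [IsOrderedRing R] {A : Matrix ι ι R} {v : ι → R}
  {S : Finset ι}

theorem mul_entry_eq_zero_of_vecMul_eq_self (hA : ∀ i j, 0 ≤ A i j) (hv : ∀ i, 0 ≤ v i)
    (hvA : v ᵥ* A = v) (hS : ∀ i ∈ S, ∑ j ∈ S, A i j = 1) {i j : ι} (hi : i ∉ S)
    (hj : j ∈ S) : v i * A i j = 0 := by
  have hmass : ∑ j ∈ S, v j = ∑ i ∈ S, v i + ∑ i ∈ Sᶜ, ∑ j ∈ S, v i * A i j :=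
    calc ∑ j ∈ S, v j = ∑ j ∈ S, ∑ i, v i * A i j :=
          sum_congr rfl fun j _ => (congrFun hvA j).symm
      _ = ∑ i, ∑ j ∈ S, v i * A i j := sum_comm
      _ = ∑ i ∈ S, ∑ j ∈ S, v i * A i j + ∑ i ∈ Sᶜ, ∑ j ∈ S, v i * A i j :=
          (sum_add_sum_compl S _).symm
      _ = ∑ i ∈ S, v i + ∑ i ∈ Sᶜ, ∑ j ∈ S, v i * A i j := by
          congr 1
          exact sum_congr rfl fun i hi => by rw [← mul_sum, hS i hi, mul_one]
  have hinflow : ∑ i ∈ Sᶜ, ∑ j ∈ S, v i * A i j = 0 := left_eq_add.mp hmass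
  have hnonneg : ∀ i j, 0 ≤ v i * A i j := fun i j => mul_nonneg (hv i) (hA i j)
  have hrow := (sum_eq_zero_iff_of_nonneg fun i _ => sum_nonneg fun j _ => hnonneg i j).mp
    hinflow i (mem_compl.mpr hi)
  exact (sum_eq_zero_iff_of_nonneg fun j _ => hnonneg i j).mp hrow j hj

theorem vecMul_submatrix_eq_self_of_sum_eq_one (hA : ∀ i j, 0 ≤ A i j) (hv : ∀ i, 0 ≤ v i)
    (hvA : v ᵥ* A = v) (hS : ∀ i ∈ S, ∑ j ∈ S, A i j = 1) :
    (fun i : S => v i) ᵥ* A.submatrix Subtype.val Subtype.val = fun i : S => v i := by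
  funext (j : S)
  calc ∑ i : S, v i * A i j = ∑ i ∈ S, v i * A i j :=
      sum_coe_sort S fun i => v i * A i j
    _ = ∑ i, v i * A i j := sum_subset (subset_univ S) fun i _ hi =>
          mul_entry_eq_zero_of_vecMul_eq_self hA hv hvA hS hi j.2
    _ = v j := congrFun hvA j

end Matrix

open Matrix

theorem induced_chain_stationary_of_equal_path_lengths_general
    (n k : ℕ) (P : Matrix (Fin n) (Fin n) ℝ)
    (hnonneg : ∀ i j, 0 ≤ P i j)
    (π : Fin n → ℝ)
    (hπ0 : ∀ i, 0 ≤ π i)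
    (hπP : Matrix.vecMul π P = π)
    (S : Finset (Fin n))
    (hret : ∀ i ∈ S, (∑ j ∈ S, (P ^ k) i j) = 1)
    (Q : Matrix {i // i ∈ S} {i // i ∈ S} ℝ)
    (hQ : ∀ i j : {i // i ∈ S}, Q i j = (P ^ k) i.1 j.1)
    (π' : {i // i ∈ S} → ℝ)
    (hπ' : ∀ i : {i // i ∈ S}, π' i = π i.1 / ∑ j ∈ S, π j) :
    ((∀ i j, 0 ≤ Q i j) ∧ (∀ i, ∑ j, Q i j = 1)) ∧
    Matrix.vecMul π' Q = π' := by
  have hQ_eq : Q = (P ^ k).submatrix Subtype.val Subtype.val := Matrix.ext hQ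
  have hπ'_eq : π' = (∑ j ∈ S, π j)⁻¹ • fun i : S => π i :=
    funext fun i => by rw [hπ' i, div_eq_inv_mul]; rfl
  subst hQ_eq hπ'_eq
  refine ⟨⟨fun i j => pow_apply_nonneg hnonneg k i j, fun i => ?_⟩, ?_⟩
  · exact (sum_coe_sort S _).trans (hret i i.2)
  · rw [smul_vecMul, vecMul_submatrix_eq_self_of_sum_eq_one (pow_apply_nonneg hnonneg k) hπ0
      (vecMul_pow_eq_self hπP k) hret]

/-- If all paths between consecutive visits to a subset `S` of states have
the same length `k`, then the induced matrix `Q = (P^k)` restricted to `S` is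
row-stochastic and the normalized restriction `π′` of the stationary vector `π` is a
stationary probability distribution of `Q`. -/
theorem induced_chain_stationary_of_equal_path_lengths
    (n k : ℕ) (hn : 1 ≤ n) (hk : 1 ≤ k) (P : Matrix (Fin n) (Fin n) ℝ)
    (hnonneg : ∀ i j, 0 ≤ P i j)
    (hrow : ∀ i, ∑ j, P i j = 1)
    (hirr : ∀ i j, ∃ m, 1 ≤ m ∧ 0 < (P ^ m) i j)
    (π : Fin n → ℝ)
    (hπ0 : ∀ i, 0 ≤ π i) (hπ1 : (∑ i, π i) = 1)
    (hπP : Matrix.vecMul π P = π)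
    (S : Finset (Fin n)) (hS : S.Nonempty)
    (hout : ∀ i ∈ S, ∀ m : ℕ, 1 ≤ m → m < k → (∑ j ∈ S, (P ^ m) i j) = 0)
    (hret : ∀ i ∈ S, (∑ j ∈ S, (P ^ k) i j) = 1)
    (Q : Matrix {i // i ∈ S} {i // i ∈ S} ℝ)
    (hQ : ∀ i j : {i // i ∈ S}, Q i j = (P ^ k) i.1 j.1)
    (π' : {i // i ∈ S} → ℝ)
    (hπ' : ∀ i : {i // i ∈ S}, π' i = π i.1 / ∑ j ∈ S, π j) :
    ((∀ i j, 0 ≤ Q i j) ∧ (∀ i, ∑ j, Q i j = 1)) ∧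
    Matrix.vecMul π' Q = π' :=
  induced_chain_stationary_of_equal_path_lengths_general n k P hnonneg π hπ0 hπP S hret Q hQ π' hπ'
end

section
/- Let n ≥ 1, let A be an n×n real row-stochastic matrix, let δ ∈ (0,1), and let C = δA + (1−δ)B where B is the n×n matrix with every entry equal to 1/n. Then there exists a unique probability vector π ∈ ℝ^n satisfying πᵀ C = πᵀ; every entry of π is strictly positive; and for every starting index x and every index i, (C^k)_{x,i} converges to π_i as k → ∞. -/
/-!
The teleportation part of `C` sends every vector of total mass zero to `0`, so on such vectors
`C` acts as `δ A`, which is a `δ`-contraction for the `ℓ¹` norm because `A` is stochastic. This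
forces uniqueness of the stationary distribution and geometric convergence of each row of `C ^ k`
towards it. Existence holds for every stochastic matrix, and positivity because every entry of
`C` is at least `(1 - δ) / n`.
-/

open Finset Filter Topology

namespace Matrix

variable {ι : Type*} [Fintype ι]

def IsStationaryDistribution (M : Matrix ι ι ℝ) (π : ι → ℝ) : Prop :=
  (∀ i, 0 ≤ π i) ∧ ∑ i, π i = 1 ∧ π ᵥ* M = π

theorem IsStationaryDistribution.pos_of_pos {C : Matrix ι ι ℝ} (hC : ∀ i j, 0 < C i j)
    {π : ι → ℝ} (hπ : IsStationaryDistribution C π) (j : ι) : 0 < π j := by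
  obtain ⟨i, -, hi⟩ := exists_lt_of_sum_lt (s := univ) (f := 0) (g := π) (by simp [hπ.2.1])
  rw [← hπ.2.2]
  exact sum_pos' (fun i _ => mul_nonneg (hπ.1 i) (hC i j).le) ⟨i, mem_univ i, mul_pos hi (hC i j)⟩

theorem IsStationaryDistribution.eq_of_contracting {C : Matrix ι ι ℝ} {δ : ℝ}
    (hC : ∀ v : ι → ℝ, ∑ i, v i = 0 → ∑ j, |(v ᵥ* C) j| ≤ δ * ∑ i, |v i|) (hδ : δ < 1)
    {π π' : ι → ℝ} (hπ : IsStationaryDistribution C π)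
    (hπ' : IsStationaryDistribution C π') : π' = π := by
  set v := π' - π
  have hv0 : ∑ i, v i = 0 := by simp [v, sum_sub_distrib, hπ.2.1, hπ'.2.1]
  have hvC : v ᵥ* C = v := by rw [sub_vecMul, hπ.2.2, hπ'.2.2]
  have hle := hC v hv0
  rw [hvC] at hle
  have hnonneg : 0 ≤ ∑ i, |v i| := sum_nonneg fun i _ => abs_nonneg _
  have hzero : ∑ i, |v i| = 0 := by nlinarith
  funext i
  exact sub_eq_zero.1 <| abs_eq_zero.1 <|
    (sum_eq_zero_iff_of_nonneg fun i _ => abs_nonneg _).1 hzero i (mem_univ i)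

variable [DecidableEq ι] {M : Matrix ι ι ℝ}

lemma sum_vecMul_of_mem_rowStochastic (hM : M ∈ rowStochastic ℝ ι) (v : ι → ℝ) :
    ∑ j, (v ᵥ* M) j = ∑ i, v i := by
  rw [← dotProduct_one, ← dotProduct_mulVec, one_vecMul_of_mem_rowStochastic hM, dotProduct_one]

lemma abs_vecMul_le_of_mem_rowStochastic (hM : M ∈ rowStochastic ℝ ι) (v : ι → ℝ) (j : ι) :
    |(v ᵥ* M) j| ≤ ((fun i => |v i|) ᵥ* M) j :=
  (abs_sum_le_sum_abs _ _).trans_eq <| sum_congr rfl fun i _ => by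
    rw [abs_mul, abs_of_nonneg (nonneg_of_mem_rowStochastic hM)]

lemma sum_abs_vecMul_le_of_mem_rowStochastic (hM : M ∈ rowStochastic ℝ ι) (v : ι → ℝ) :
    ∑ j, |(v ᵥ* M) j| ≤ ∑ i, |v i| :=
  (sum_le_sum fun j _ => abs_vecMul_le_of_mem_rowStochastic hM v j).trans_eq
    (sum_vecMul_of_mem_rowStochastic hM _)

/-- `M - 1` is singular since `M *ᵥ 1 = 1`, so it has a left null vector `v`. Then `|v|` is
subinvariant and has the same total mass as `|v| ᵥ* M`, hence is invariant; normalize it. -/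
theorem exists_isStationaryDistribution_of_mem_rowStochastic [Nonempty ι]
    (hM : M ∈ rowStochastic ℝ ι) : ∃ π, IsStationaryDistribution M π := by
  obtain ⟨v, hv0, hv⟩ : ∃ v ≠ 0, v ᵥ* (M - 1) = 0 := by
    rw [exists_vecMul_eq_zero_iff, ← exists_mulVec_eq_zero_iff]
    exact ⟨1, one_ne_zero, by rw [sub_mulVec, one_vecMul_of_mem_rowStochastic hM, one_mulVec,
      sub_self]⟩
  have hvM : v ᵥ* M = v := by rwa [vecMul_sub, vecMul_one, sub_eq_zero] at hv
  set w : ι → ℝ := fun i => |v i|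
  have hle : ∀ j, w j ≤ (w ᵥ* M) j := fun j => by
    simpa only [hvM] using abs_vecMul_le_of_mem_rowStochastic hM v j
  have hwM : w ᵥ* M = w := funext fun j => ((sum_eq_sum_iff_of_le fun j _ => hle j).1
    (sum_vecMul_of_mem_rowStochastic hM w).symm j (mem_univ j)).symm
  have hw : 0 < ∑ i, w i := by
    obtain ⟨i, hi⟩ := Function.ne_iff.1 hv0
    exact sum_pos' (fun i _ => abs_nonneg _) ⟨i, mem_univ i, abs_pos.2 hi⟩
  refine ⟨(∑ i, w i)⁻¹ • w, fun i => ?_, ?_, ?_⟩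
  · exact mul_nonneg (inv_nonneg.2 hw.le) (abs_nonneg _)
  · simp only [Pi.smul_apply, smul_eq_mul, ← mul_sum, inv_mul_cancel₀ hw.ne']
  · rw [smul_vecMul, hwM]

theorem sum_abs_vecMul_add_vecMulVec_le {A : Matrix ι ι ℝ} (hA : A ∈ rowStochastic ℝ ι)
    {δ : ℝ} (hδ : 0 ≤ δ) (b : ι → ℝ) {v : ι → ℝ} (hv : ∑ i, v i = 0) :
    ∑ j, |(v ᵥ* (δ • A + vecMulVec 1 b)) j| ≤ δ * ∑ i, |v i| := by
  rw [vecMul_add, vecMul_smul, vecMul_vecMulVec, dotProduct_one, hv, zero_smul, add_zero]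
  simp only [Pi.smul_apply, smul_eq_mul, abs_mul, abs_of_nonneg hδ, ← mul_sum]
  exact mul_le_mul_of_nonneg_left (sum_abs_vecMul_le_of_mem_rowStochastic hA v) hδ

theorem tendsto_pow_apply_of_contracting {C : Matrix ι ι ℝ} {δ : ℝ}
    (hC : ∀ v : ι → ℝ, ∑ i, v i = 0 → ∑ j, |(v ᵥ* C) j| ≤ δ * ∑ i, |v i|)
    (hC1 : C ∈ rowStochastic ℝ ι) (hδ0 : 0 ≤ δ) (hδ1 : δ < 1) {π : ι → ℝ}
    (hπ : IsStationaryDistribution C π) (x i : ι) :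
    Tendsto (fun k => (C ^ k) x i) atTop (𝓝 (π i)) := by
  set D := ∑ j, |(1 : Matrix ι ι ℝ) x j - π j|
  have hbound : ∀ k, ∑ j, |(C ^ k) x j - π j| ≤ δ ^ k * D := by
    intro k
    induction k with
    | zero => simp [D]
    | succ k ih =>
      have hrow : (C ^ (k + 1)) x - π = ((C ^ k) x - π) ᵥ* C := by
        rw [sub_vecMul, hπ.2.2, pow_succ]; rfl
      have hzero : ∑ j, ((C ^ k) x - π) j = 0 := by
        simp [sum_sub_distrib, sum_row_of_mem_rowStochastic (pow_mem hC1 k), hπ.2.1]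
      calc ∑ j, |(C ^ (k + 1)) x j - π j| = ∑ j, |(((C ^ k) x - π) ᵥ* C) j| := by
            rw [← hrow]; rfl
        _ ≤ δ * ∑ j, |(C ^ k) x j - π j| := hC _ hzero
        _ ≤ δ * (δ ^ k * D) := by gcongr
        _ = δ ^ (k + 1) * D := by ring
  refine tendsto_sub_nhds_zero_iff.1 (squeeze_zero_norm (fun k => ?_)
    (by simpa using (tendsto_pow_atTop_nhds_zero_of_lt_one hδ0 hδ1).mul_const D))
  exact (single_le_sum (f := fun j => |(C ^ k) x j - π j|) (fun j _ => abs_nonneg _)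
    (mem_univ i)).trans (hbound k)

end Matrix

open Matrix

/-- The PageRank composite `C = δ A + (1 - δ) B` has a unique stationary
probability vector `π`; `π` is strictly positive and `(C^k) x i → π i` for every
starting state `x`. -/
theorem pagerank_unique_stationary_distribution
    (n : ℕ) (hn : 1 ≤ n) (A : Matrix (Fin n) (Fin n) ℝ)
    (hnonneg : ∀ i j, 0 ≤ A i j)
    (hrow : ∀ i, ∑ j, A i j = 1)
    (δ : ℝ) (hδ0 : 0 < δ) (hδ1 : δ < 1)
    (B : Matrix (Fin n) (Fin n) ℝ) (hB : ∀ i j, B i j = 1 / n)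
    (C : Matrix (Fin n) (Fin n) ℝ) (hC : C = δ • A + (1 - δ) • B) :
    ∃ π : Fin n → ℝ,
      ((∀ i, 0 ≤ π i) ∧ (∑ i, π i) = 1 ∧ Matrix.vecMul π C = π) ∧
      (∀ π' : Fin n → ℝ,
        ((∀ i, 0 ≤ π' i) ∧ (∑ i, π' i) = 1 ∧ Matrix.vecMul π' C = π') → π' = π) ∧
      (∀ i, 0 < π i) ∧
      (∀ x i, Filter.Tendsto (fun k : ℕ => (C ^ k) x i) Filter.atTop (nhds (π i))) := by
  have : Nonempty (Fin n) := ⟨⟨0, hn⟩⟩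
  have hA : A ∈ rowStochastic ℝ (Fin n) := mem_rowStochastic_iff_sum.2 ⟨hnonneg, hrow⟩
  have hteleport : C = δ • A + vecMulVec 1 (fun _ => (1 - δ) / n) := by
    ext i j; simp [hC, hB, div_eq_mul_inv]
  have hCpos : ∀ i j, 0 < C i j := fun i j => by
    rw [hteleport]
    simpa [vecMulVec_apply] using add_pos_of_nonneg_of_pos (mul_nonneg hδ0.le (hnonneg i j))
      (div_pos (sub_pos.2 hδ1) (by positivity))
  have hCstoch : C ∈ rowStochastic ℝ (Fin n) := by
    refine mem_rowStochastic_iff_sum.2 ⟨fun i j => (hCpos i j).le, fun i => ?_⟩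
    simp [hteleport, sum_add_distrib, ← mul_sum, hrow]
    field_simp
    ring
  have hcontract : ∀ v : Fin n → ℝ, ∑ i, v i = 0 → ∑ j, |(v ᵥ* C) j| ≤ δ * ∑ i, |v i| :=
    fun v hv => hteleport ▸ sum_abs_vecMul_add_vecMulVec_le hA hδ0.le _ hv
  obtain ⟨π, hπ⟩ := exists_isStationaryDistribution_of_mem_rowStochastic hCstoch
  exact ⟨π, hπ, fun π' hπ' =>
    IsStationaryDistribution.eq_of_contracting hcontract hδ1 hπ hπ', hπ.pos_of_pos hCpos,
    tendsto_pow_apply_of_contracting hcontract hCstoch hδ0.le hδ1 hπ⟩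
end
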